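/- Fix ρ ∈ (0,1). There exists h₀ ∈ (0,1) such that for every h ∈ (0,h₀) the function f_h(v) = v − 1 + (v+1)·exp(−2v·h^{−ρ}) has exactly one zero w_h in (0,∞); this zero satisfies w_h ∈ (1 − h^{ρ/2}, 1), and (1 − w_h)·exp(2h^{−ρ}) → 2 as h → 0⁺ (that is, w_h = 1 − 2(1+o(1))·exp(−2h^{−ρ})). -/

import Mathlib

/-!
Write `f_L(v) = v - 1 + (v + 1) e^{-2vL}` with `L = h^{-ρ}`. Since `f_L(0) = 0` and `f_L` is
strictly convex on `[0, ∞)` for `L ≥ 1`, it has at most one positive zero; with `ε = L^{-1/2}`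
the signs `f_L(1 - ε) < 0 < f_L(1)` place one in `(1 - ε, 1)`. At that zero `w`,
`(1 - w) e^{2L} = (w + 1) e^{2(1 - w)L}` and `1 - w ≤ 2e^{-L}`, which squeeze
`(1 - w) e^{2L}` between `2 - 2e^{-L}` and `2 exp(4Le^{-L})`, both tending to `2`.
-/

open Real Set

noncomputable section

/-- The secular function whose zeros `w > 0` correspond, via `λ = -w²`, to the negative
eigenvalues of the 1D Laplacian on `(0, h^{-ρ})` with Robin condition `u'(0) = -u(0)`
and Dirichlet condition `u(h^{-ρ}) = 0`. -/
def secular (ρ h v : ℝ) : ℝ := v - 1 + (v + 1) * Real.exp (-2 * v * h ^ (-ρ))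

open Filter Topology

theorem StrictConvexOn.subsingleton_pos_zeros {f : ℝ → ℝ} (hf : StrictConvexOn ℝ (Ici 0) f)
    (hf0 : f 0 = 0) : {x | 0 < x ∧ f x = 0}.Subsingleton := by
  rintro a ⟨ha, hfa⟩ b ⟨hb, hfb⟩
  by_contra hab
  rcases lt_or_gt_of_ne hab with hlt | hlt
  · have := hf.secant_strict_mono self_mem_Ici ha.le hb.le ha.ne' hb.ne' hlt
    simp [hf0, hfa, hfb] at this
  · have := hf.secant_strict_mono self_mem_Ici hb.le ha.le hb.ne' ha.ne' hlt
    simp [hf0, hfa, hfb] at this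

/-- `secular ρ h` is definitionally `robinSecular (h ^ (-ρ))`, with `L = h ^ (-ρ)` the length of
the interval. -/
def robinSecular (L v : ℝ) : ℝ := v - 1 + (v + 1) * exp (-2 * v * L)

section robinSecular

variable {L : ℝ}

theorem robinSecular_zero (L : ℝ) : robinSecular L 0 = 0 := by
  simp [robinSecular]

theorem hasDerivAt_exp_neg_two_mul_mul (L v : ℝ) :
    HasDerivAt (fun v => exp (-2 * v * L)) (-2 * L * exp (-2 * v * L)) v := by
  have h_lin : HasDerivAt (fun v => -2 * v * L) (-2 * L) v := by
    simpa using ((hasDerivAt_id' v).const_mul (-2)).mul_const L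
  simpa [mul_comm] using h_lin.exp

theorem hasDerivAt_robinSecular (L v : ℝ) :
    HasDerivAt (robinSecular L) (1 + (1 - 2 * L * (v + 1)) * exp (-2 * v * L)) v := by
  have := ((hasDerivAt_id' v).sub_const 1).add
    (((hasDerivAt_id' v).add_const 1).mul (hasDerivAt_exp_neg_two_mul_mul L v))
  exact this.congr_deriv (by ring)

theorem hasDerivAt_deriv_robinSecular (L v : ℝ) :
    HasDerivAt (fun v => 1 + (1 - 2 * L * (v + 1)) * exp (-2 * v * L))
      (4 * L * (L * (v + 1) - 1) * exp (-2 * v * L)) v := by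
  have := (((((hasDerivAt_id' v).add_const 1).const_mul (2 * L)).const_sub 1).mul
    (hasDerivAt_exp_neg_two_mul_mul L v)).const_add 1
  exact this.congr_deriv (by ring)

theorem strictConvexOn_robinSecular (hL : 1 ≤ L) :
    StrictConvexOn ℝ (Ici 0) (robinSecular L) := by
  have hderiv : deriv (robinSecular L) = fun v => 1 + (1 - 2 * L * (v + 1)) * exp (-2 * v * L) :=
    funext fun v => (hasDerivAt_robinSecular L v).deriv
  refine StrictMonoOn.strictConvexOn_of_deriv (convex_Ici 0)
    (fun v _ => (hasDerivAt_robinSecular L v).continuousAt.continuousWithinAt) ?_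
  rw [hderiv, interior_Ici]
  refine strictMonoOn_of_deriv_pos (convex_Ioi 0)
    (fun v _ => (hasDerivAt_deriv_robinSecular L v).continuousAt.continuousWithinAt) ?_
  intro v hv
  rw [interior_Ioi] at hv
  rw [(hasDerivAt_deriv_robinSecular L v).deriv]
  have : 0 < L * (v + 1) - 1 := by nlinarith [mem_Ioi.1 hv]
  positivity

theorem robinSecular_one_pos (L : ℝ) : 0 < robinSecular L 1 := by
  unfold robinSecular; positivity

theorem robinSecular_one_sub_neg {ε : ℝ} (hε0 : 0 < ε) (hε : ε < 1 / 2)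
    (hεL : ε ^ 2 * L = 1) :
    robinSecular L (1 - ε) < 0 := by
  have hL : 0 < L := by nlinarith
  have h_exp : exp (-2 * (1 - ε) * L) < exp (-L) := exp_lt_exp.2 (by nlinarith)
  -- `e^{-L} < 1/L = ε²`
  have h_exp_neg : exp (-L) < ε ^ 2 := by
    rw [exp_neg, inv_lt_iff_one_lt_mul₀ (exp_pos L)]
    nlinarith [add_one_lt_exp hL.ne']
  unfold robinSecular
  nlinarith [exp_pos (-2 * (1 - ε) * L)]

theorem existsUnique_robinSecular_eq_zero {ε : ℝ} (hε0 : 0 < ε) (hε : ε < 1 / 2)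
    (hεL : ε ^ 2 * L = 1) :
    ∃ w ∈ Ioo (1 - ε) 1, robinSecular L w = 0 ∧
      ∀ v, 0 < v → robinSecular L v = 0 → v = w := by
  obtain ⟨w, hw, hw0⟩ := intermediate_value_Ioo (by linarith : 1 - ε ≤ 1)
    (fun v _ => (hasDerivAt_robinSecular L v).continuousAt.continuousWithinAt)
    ⟨robinSecular_one_sub_neg hε0 hε hεL, robinSecular_one_pos L⟩
  refine ⟨w, hw, hw0, fun v hv hv0 => ?_⟩
  have hL : 1 ≤ L := by nlinarith
  exact (strictConvexOn_robinSecular hL).subsingleton_pos_zeros (robinSecular_zero L)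
    ⟨hv, hv0⟩ ⟨by linarith [hw.1], hw0⟩

/-- The positive zero of `robinSecular L`; junk when there is none. -/
def robinZero (L : ℝ) : ℝ := Classical.epsilon fun w => 0 < w ∧ robinSecular L w = 0

theorem robinZero_spec {ε : ℝ} (hε0 : 0 < ε) (hε : ε < 1 / 2) (hεL : ε ^ 2 * L = 1) :
    robinZero L ∈ Ioo (1 - ε) 1 ∧ robinSecular L (robinZero L) = 0 ∧
      ∀ v, 0 < v → robinSecular L v = 0 → v = robinZero L := by
  obtain ⟨w, hw, hw0, hw_unique⟩ := existsUnique_robinSecular_eq_zero hε0 hε hεL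
  have hw_pos : 0 < w := by linarith [hw.1]
  obtain ⟨hz_pos, hz0⟩ : 0 < robinZero L ∧ robinSecular L (robinZero L) = 0 :=
    Classical.epsilon_spec (p := fun w => 0 < w ∧ robinSecular L w = 0) ⟨w, hw_pos, hw0⟩
  exact hw_unique _ hz_pos hz0 ▸ ⟨hw, hw0, hw_unique⟩

theorem robinSecular_eq_zero_bounds {w : ℝ} (hL : 0 ≤ L) (hw : w ∈ Ioo (1 / 2) 1)
    (hw0 : robinSecular L w = 0) :
    2 - 2 * exp (-L) ≤ (1 - w) * exp (2 * L) ∧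
      (1 - w) * exp (2 * L) ≤ 2 * exp (4 * (L * exp (-L))) := by
  obtain ⟨hw1, hw2⟩ := hw
  have h_one_sub : 1 - w = (w + 1) * exp (-2 * w * L) := by
    unfold robinSecular at hw0; linarith
  have h_scaled : (1 - w) * exp (2 * L) = (w + 1) * exp (2 * (1 - w) * L) := by
    rw [show 2 * (1 - w) * L = -2 * w * L + 2 * L by ring, exp_add, h_one_sub]; ring
  have h_one_sub_le : 1 - w ≤ 2 * exp (-L) := by
    rw [h_one_sub]
    have : exp (-2 * w * L) ≤ exp (-L) := exp_le_exp.2 (by nlinarith)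
    nlinarith [exp_pos (-2 * w * L)]
  constructor
  · rw [h_scaled]
    nlinarith [one_le_exp (by nlinarith : 0 ≤ 2 * (1 - w) * L)]
  · rw [h_scaled]
    have : exp (2 * (1 - w) * L) ≤ exp (4 * (L * exp (-L))) := exp_le_exp.2 (by nlinarith)
    nlinarith [exp_pos (2 * (1 - w) * L)]

end robinSecular

theorem tendsto_one_sub_mul_exp_of_robinSecular_eq_zero {α : Type*} {l : Filter α}
    {L w : α → ℝ} (hL : Tendsto L l atTop)
    (hw : ∀ᶠ x in l, w x ∈ Ioo (1 / 2) 1 ∧ robinSecular (L x) (w x) = 0) :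
    Tendsto (fun x => (1 - w x) * exp (2 * L x)) l (𝓝 2) := by
  have h_lower : Tendsto (fun L => 2 - 2 * exp (-L)) atTop (𝓝 2) := by
    simpa using (tendsto_exp_neg_atTop_nhds_zero.const_mul 2).const_sub 2
  have h_upper : Tendsto (fun L => 2 * exp (4 * (L * exp (-L)))) atTop (𝓝 2) := by
    have : Tendsto (fun L => 4 * (L * exp (-L))) atTop (𝓝 0) := by
      simpa using (tendsto_pow_mul_exp_neg_atTop_nhds_zero 1).const_mul 4
    simpa using ((continuous_exp.tendsto 0).comp this).const_mul 2
  refine tendsto_of_tendsto_of_tendsto_of_le_of_le' (h_lower.comp hL) (h_upper.comp hL) ?_ ?_ <;>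
  filter_upwards [hw, hL.eventually_ge_atTop 0] with x ⟨hwx, hw0⟩ hLx
  exacts [(robinSecular_eq_zero_bounds hLx hwx hw0).1, (robinSecular_eq_zero_bounds hLx hwx hw0).2]

theorem rpow_half_sq_mul_rpow_neg {h : ℝ} (hh : 0 < h) (ρ : ℝ) :
    (h ^ (ρ / 2)) ^ 2 * h ^ (-ρ) = 1 := by
  rw [← rpow_mul_natCast hh.le, rpow_neg hh.le]
  norm_num [(rpow_pos_of_pos hh ρ).ne']

theorem secular_unique_zero (ρ : ℝ) (hρ : ρ ∈ Set.Ioo (0 : ℝ) 1) :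
    ∃ h₀ ∈ Set.Ioo (0 : ℝ) 1, ∃ w : ℝ → ℝ,
      (∀ h ∈ Set.Ioo (0 : ℝ) h₀,
        0 < w h ∧ secular ρ h (w h) = 0 ∧
        (∀ v : ℝ, 0 < v → secular ρ h v = 0 → v = w h) ∧
        w h ∈ Set.Ioo (1 - h ^ (ρ / 2)) 1) ∧
      Filter.Tendsto (fun h : ℝ => (1 - w h) * Real.exp (2 * h ^ (-ρ)))
        (nhdsWithin 0 (Set.Ioi 0)) (nhds 2) := by
  have hρ2 : 0 < ρ / 2 := by linarith [hρ.1]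
  -- `h < h₀ ↔ h ^ (ρ / 2) < 1 / 2`
  set h₀ : ℝ := (1 / 2) ^ (ρ / 2)⁻¹
  have h₀_pos : 0 < h₀ := by positivity
  have h_small : ∀ h ∈ Ioo 0 h₀, h ^ (ρ / 2) < 1 / 2 := fun h hh =>
    (lt_rpow_inv_iff_of_pos hh.1.le (by norm_num) hρ2).1 hh.2
  have hw : ∀ h ∈ Ioo 0 h₀, robinZero (h ^ (-ρ)) ∈ Ioo (1 - h ^ (ρ / 2)) 1 ∧
      secular ρ h (robinZero (h ^ (-ρ))) = 0 ∧
      ∀ v, 0 < v → secular ρ h v = 0 → v = robinZero (h ^ (-ρ)) := fun h hh =>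
    robinZero_spec (rpow_pos_of_pos hh.1 _) (h_small h hh) (rpow_half_sq_mul_rpow_neg hh.1 ρ)
  refine ⟨h₀, ⟨h₀_pos, rpow_lt_one (by norm_num) (by norm_num) (by positivity)⟩,
    fun h => robinZero (h ^ (-ρ)), fun h hh => ?_, ?_⟩
  · obtain ⟨hw_mem, hw0, hw_unique⟩ := hw h hh
    exact ⟨by linarith [hw_mem.1, h_small h hh], hw0, hw_unique, hw_mem⟩
  · refine tendsto_one_sub_mul_exp_of_robinSecular_eq_zero
      (tendsto_rpow_neg_nhdsGT_zero (by linarith [hρ.1])) ?_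
    filter_upwards [Ioo_mem_nhdsGT h₀_pos] with h hh
    obtain ⟨hw_mem, hw0, -⟩ := hw h hh
    exact ⟨⟨by linarith [hw_mem.1, h_small h hh], hw_mem.2⟩, hw0⟩
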